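/- Let A be a uniform algebra with maximal ideal space M_A, and let φ, ψ ∈ M_A. If there is a constant c > 0 such that u(φ) ≤ c·u(ψ) for every u ≥ 0 of the form u = Re f̂ with f ∈ A (where f̂ denotes the Gelfand transform), and symmetrically u(ψ) ≤ c·u(φ), then ‖φ − ψ‖_{A*} < 2. -/
import Mathlib

lemma char_norm_le {X : Type*} [TopologicalSpace X] [CompactSpace X]
    {A : Subalgebra ℂ C(X, ℂ)} (hclosed : IsClosed (A : Set C(X, ℂ)))
    (χ : WeakDual.characterSpace ℂ A) (f : A) : ‖χ f‖ ≤ ‖f‖ := by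
  haveI : CompleteSpace A := hclosed.completeSpace_coe
  have h1 : ‖(1 : A)‖ ≤ 1 := by
    show ‖((1:A) : C(X,ℂ))‖ ≤ 1
    rw [ContinuousMap.norm_le _ zero_le_one]; intro x; simp
  calc ‖χ f‖ ≤ ‖f‖ * ‖(1 : A)‖ :=
        spectrum.norm_le_norm_mul_of_mem (WeakDual.CharacterSpace.apply_mem_spectrum χ f)
    _ ≤ ‖f‖ * 1 := by gcongr
    _ = ‖f‖ := mul_one _

noncomputable def characterDist {X : Type*} [TopologicalSpace X] [CompactSpace X]
    (A : Subalgebra ℂ C(X, ℂ))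
    (φ ψ : WeakDual.characterSpace ℂ A) : ℝ :=
  sSup {r : ℝ | ∃ f : A, ‖f‖ ≤ 1 ∧ r = ‖φ f - ψ f‖}

set_option synthInstance.maxHeartbeats 1000000 in
theorem stmt17 {X : Type*} [TopologicalSpace X] [CompactSpace X] [T2Space X]
    (A : Subalgebra ℂ C(X, ℂ)) (hclosed : IsClosed (A : Set C(X, ℂ)))
    (hsep : ∀ x y : X, x ≠ y → ∃ f ∈ A, f x ≠ f y)
    (φ ψ : WeakDual.characterSpace ℂ A)
    (h : ∃ c > (0 : ℝ), ∀ f : A,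
      (∀ χ : WeakDual.characterSpace ℂ A, 0 ≤ (χ f).re) →
      (φ f).re ≤ c * (ψ f).re ∧ (ψ f).re ≤ c * (φ f).re) :
    characterDist A φ ψ < 2 := by
  obtain ⟨c, hc, hcomp⟩ := h
  have hM : 2 * c / (c + 1) < 2 := by
    rw [div_lt_iff₀ (by linarith)]; linarith
  have hM0 : (0:ℝ) ≤ 2 * c / (c + 1) := by positivity
  refine lt_of_le_of_lt (Real.sSup_le ?_ hM0) hM
  rintro r ⟨f, hf, rfl⟩
  set z : ℂ := φ f - ψ f with hz
  by_cases hz0 : z = 0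
  · simp [hz0]; positivity
  · set r : ℝ := ‖z‖ with hr
    have hrpos : 0 < r := norm_pos_iff.mpr hz0
    set lam : ℂ := (r : ℂ) / z with hlam
    have hlamnorm : ‖lam‖ = 1 := by
      rw [hlam, norm_div, Complex.norm_real, Real.norm_of_nonneg hrpos.le, hr,
        div_self (norm_ne_zero_iff.mpr hz0)]
    set g : A := lam • f with hg
    have hgnorm : ‖g‖ ≤ 1 := by
      rw [hg, norm_smul, hlamnorm, one_mul]; exact hf
    have hchig : ∀ χ : WeakDual.characterSpace ℂ A, χ g = lam * χ f := by
      intro χ; rw [hg, map_smul, smul_eq_mul]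
    have hdiff : φ g - ψ g = (r : ℂ) := by
      rw [hchig, hchig, ← mul_sub, ← hz, hlam, div_mul_cancel₀ _ hz0]
    -- bounds on real parts
    have hbound : ∀ χ : WeakDual.characterSpace ℂ A, |(χ g).re| ≤ 1 := fun χ =>
      (Complex.abs_re_le_norm _).trans ((char_norm_le hclosed χ g).trans hgnorm)
    set a := (φ g).re with ha
    set b := (ψ g).re with hb
    have hab : a - b = r := by
      have := congrArg Complex.re hdiff
      simpa [Complex.sub_re] using this
    have ha1 : a ≤ 1 := (abs_le.mp (hbound φ)).2
    have hb1 : -1 ≤ b := (abs_le.mp (hbound ψ)).1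
    -- the test function (1 + g)/2
    set u : A := (2:ℂ)⁻¹ • (1 + g) with hu
    have hchiu : ∀ χ : WeakDual.characterSpace ℂ A, (χ u).re = (1 + (χ g).re) / 2 := by
      intro χ
      rw [hu, map_smul, smul_eq_mul, map_add, map_one]
      simp [Complex.mul_re, Complex.add_re]
      ring
    have hpos : ∀ χ : WeakDual.characterSpace ℂ A, 0 ≤ (χ u).re := by
      intro χ
      rw [hchiu]
      have := (abs_le.mp (hbound χ)).1
      linarith
    have hineq := (hcomp u hpos).1
    rw [hchiu φ, hchiu ψ] at hineq
    -- now: (1+a)/2 ≤ c (1+b)/2, a - b = r, a ≤ 1, -1 ≤ b, c > 0 ⊢ r ≤ 2c/(c+1)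
    rw [le_div_iff₀ (by linarith : (0:ℝ) < c + 1)]
    nlinarith [hineq, hab, ha1, hb1, hc]
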